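/- arXiv:2601.06622 — 6 statements merged into one kernel-verified Lean document; each statement's English description precedes it below -/
import Mathlib

section
/- Let H be a real Hilbert space and h : H → ℝ be convex and strongly convex with modulus σ_h ≥ 0 in the sense that h(λx + (1−λ)y) ≤ λh(x) + (1−λ)h(y) − (σ_h/2)λ(1−λ)‖x−y‖² for all x, y and λ ∈ [0,1]. If v is an ε-subgradient of h at w (ε ≥ 0), then for every u ∈ H one has ⟨v, u − w⟩ + (σ_h/4)‖u − w‖² ≤ h(u) − h(w) + 2ε. -/
open scoped RealInnerProductSpace

/-- If `h` is convex and strongly convex with modulus `σh ≥ 0`, and `v` is an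
`ε`-subgradient of `h` at `w`, then `⟨v, u − w⟩ + (σh/4)‖u − w‖² ≤ h u − h w + 2ε`. -/
theorem esubgrad_strong_convex_estimate
    {H : Type*} [NormedAddCommGroup H] [InnerProductSpace ℝ H] [CompleteSpace H]
    (h : H → ℝ) (σh : ℝ) (hσh : 0 ≤ σh)
    (hconv : ConvexOn ℝ Set.univ h)
    (hsc : ∀ x y : H, ∀ l : ℝ, 0 ≤ l → l ≤ 1 →
      h (l • x + (1 - l) • y) ≤ l * h x + (1 - l) * h y - σh / 2 * (l * (1 - l)) * ‖x - y‖ ^ 2)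
    (ε : ℝ) (hε : 0 ≤ ε) (w v : H)
    (hv : ∀ u' : H, ⟪v, u' - w⟫ ≤ h u' - h w + ε) :
    ∀ u : H, ⟪v, u - w⟫ + σh / 4 * ‖u - w‖ ^ 2 ≤ h u - h w + 2 * ε := by
  intro u
  have h1 := hv ((1/2 : ℝ) • u + (1 - 1/2 : ℝ) • w)
  have h2 := hsc u w (1/2) (by norm_num) (by norm_num)
  have hinner : ⟪v, ((1/2 : ℝ) • u + (1 - 1/2 : ℝ) • w) - w⟫ = (1/2 : ℝ) * ⟪v, u - w⟫ := by
    have : ((1/2 : ℝ) • u + (1 - 1/2 : ℝ) • w) - w = (1/2 : ℝ) • (u - w) := by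
      module
    rw [this, real_inner_smul_right]
  rw [hinner] at h1
  nlinarith [h1, h2]
end

section
/- Let H be a real Hilbert space and g, h : H → ℝ convex functions, strongly convex with moduli σ_g, σ_h ≥ 0 respectively, and let f := g − h. Suppose v ∈ ∂_ε h(w) and v ∈ ∂_ε g(u) for some ε ≥ 0 and u, w ∈ H. Then ((σ_g + σ_h)/4)‖u − w‖² ≤ f(w) − f(u) + 4ε. -/
open scoped RealInnerProductSpace

/-- If `g, h` are convex with strong convexity moduli `σg, σh ≥ 0`,
`f := g − h`, and `v ∈ ∂_ε h(w)` and `v ∈ ∂_ε g(u)`, then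
`((σg + σh)/4)‖u − w‖² ≤ f w − f u + 4ε`. -/
theorem dc_descent_key_estimate
    {H : Type*} [NormedAddCommGroup H] [InnerProductSpace ℝ H] [CompleteSpace H]
    (g h : H → ℝ) (σg σh : ℝ) (hσg : 0 ≤ σg) (hσh : 0 ≤ σh)
    (hgconv : ConvexOn ℝ Set.univ g) (hhconv : ConvexOn ℝ Set.univ h)
    (hgsc : ∀ x y : H, ∀ l : ℝ, 0 ≤ l → l ≤ 1 →
      g (l • x + (1 - l) • y) ≤ l * g x + (1 - l) * g y - σg / 2 * (l * (1 - l)) * ‖x - y‖ ^ 2)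
    (hhsc : ∀ x y : H, ∀ l : ℝ, 0 ≤ l → l ≤ 1 →
      h (l • x + (1 - l) • y) ≤ l * h x + (1 - l) * h y - σh / 2 * (l * (1 - l)) * ‖x - y‖ ^ 2)
    (f : H → ℝ) (hf : ∀ x, f x = g x - h x)
    (ε : ℝ) (hε : 0 ≤ ε) (u w v : H)
    (hvh : ∀ u' : H, ⟪v, u' - w⟫ ≤ h u' - h w + ε)
    (hvg : ∀ u' : H, ⟪v, u' - u⟫ ≤ g u' - g u + ε) :
    (σg + σh) / 4 * ‖u - w‖ ^ 2 ≤ f w - f u + 4 * ε := by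
  have hg := hgsc u w (1/2) (by norm_num) (by norm_num)
  have hh := hhsc u w (1/2) (by norm_num) (by norm_num)
  have hvg' := hvg ((1/2 : ℝ) • u + (1 - 1/2 : ℝ) • w)
  have hvh' := hvh ((1/2 : ℝ) • u + (1 - 1/2 : ℝ) • w)
  have e1 : ((1/2 : ℝ) • u + (1 - 1/2 : ℝ) • w) - u = (1/2 : ℝ) • (w - u) := by
    module
  have e2 : ((1/2 : ℝ) • u + (1 - 1/2 : ℝ) • w) - w = (1/2 : ℝ) • (u - w) := by
    module
  rw [e1, real_inner_smul_right] at hvg'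
  rw [e2, real_inner_smul_right] at hvh'
  have hi : ⟪v, w - u⟫ = -⟪v, u - w⟫ := by
    rw [← inner_neg_right]; congr 1; abel
  rw [hi] at hvg'
  rw [hf, hf]
  nlinarith [hg, hh, hvg', hvh']
end

section
/- Let H be a real Hilbert space, g, h : H → ℝ convex with strong convexity moduli σ_g, σ_h and σ_g + σ_h > 0, f := g − h bounded below by some finite value m. Suppose sequences (u^k), (w^k), (v^k), (ε_k) satisfy for every k: f(w^k) ≤ f(u^k), v^k ∈ ∂_{ε_k} h(w^k), v^k ∈ ∂_{ε_k} g(u^{k+1}), and ε_k ≤ ((σ_g + σ_h)/32)‖u^{k+1} − w^k‖². Then for each k, ((σ_g + σ_h)/8)‖u^{k+1} − w^k‖² ≤ f(u^k) − f(u^{k+1}); in particular the sequence f(u^k) is nonincreasing. -/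
open scoped RealInnerProductSpace

/-- Descent estimate for one iteration of the inexact adaptive DC algorithm
(I-ADCA): under the stated conditions on the iterates,
`((σg + σh)/8)‖u^{k+1} − w^k‖² ≤ f(u^k) − f(u^{k+1})`; in particular `f(u^k)` is
nonincreasing. -/
theorem iadca_descent
    {H : Type*} [NormedAddCommGroup H] [InnerProductSpace ℝ H] [CompleteSpace H]
    (g h : H → ℝ) (σg σh : ℝ) (hσg : 0 ≤ σg) (hσh : 0 ≤ σh) (hσ : 0 < σg + σh)
    (hgconv : ConvexOn ℝ Set.univ g) (hhconv : ConvexOn ℝ Set.univ h)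
    (hgsc : ∀ x y : H, ∀ l : ℝ, 0 ≤ l → l ≤ 1 →
      g (l • x + (1 - l) • y) ≤ l * g x + (1 - l) * g y - σg / 2 * (l * (1 - l)) * ‖x - y‖ ^ 2)
    (hhsc : ∀ x y : H, ∀ l : ℝ, 0 ≤ l → l ≤ 1 →
      h (l • x + (1 - l) • y) ≤ l * h x + (1 - l) * h y - σh / 2 * (l * (1 - l)) * ‖x - y‖ ^ 2)
    (f : H → ℝ) (hf : ∀ x, f x = g x - h x)
    (m : ℝ) (hbdd : ∀ x, m ≤ f x)
    (u w v : ℕ → H) (ε : ℕ → ℝ) (hεnn : ∀ k, 0 ≤ ε k)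
    (hw : ∀ k, f (w k) ≤ f (u k))
    (hvh : ∀ k, ∀ u' : H, ⟪v k, u' - w k⟫ ≤ h u' - h (w k) + ε k)
    (hvg : ∀ k, ∀ u' : H, ⟪v k, u' - u (k + 1)⟫ ≤ g u' - g (u (k + 1)) + ε k)
    (hεsmall : ∀ k, ε k ≤ (σg + σh) / 32 * ‖u (k + 1) - w k‖ ^ 2) :
    (∀ k, (σg + σh) / 8 * ‖u (k + 1) - w k‖ ^ 2 ≤ f (u k) - f (u (k + 1))) ∧
      (∀ k, f (u (k + 1)) ≤ f (u k)) := by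
  have key : ∀ k, (σg + σh) / 8 * ‖u (k + 1) - w k‖ ^ 2 ≤ f (u k) - f (u (k + 1)) := by
    intro k
    set a := u (k + 1) with ha
    set x := w k with hx
    have h1 := hvh k ((1/2 : ℝ) • a + (1 - (1/2 : ℝ)) • x)
    have h2 := hvg k ((1/2 : ℝ) • x + (1 - (1/2 : ℝ)) • a)
    have h3 := hhsc a x (1/2) (by norm_num) (by norm_num)
    have h4 := hgsc x a (1/2) (by norm_num) (by norm_num)
    have e1 : ((1/2 : ℝ) • a + (1 - (1/2 : ℝ)) • x) - x = (1/2 : ℝ) • (a - x) := by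
      module
    have e2 : ((1/2 : ℝ) • x + (1 - (1/2 : ℝ)) • a) - a = (1/2 : ℝ) • (x - a) := by
      module
    rw [e1, real_inner_smul_right] at h1
    rw [e2, real_inner_smul_right, ← neg_sub a x, inner_neg_right] at h2
    have hnx : ‖x - a‖ = ‖a - x‖ := norm_sub_rev _ _
    rw [hnx] at h4
    have hsm := hεsmall k
    have hne := hεnn k
    have hwk := hw k
    simp only [hf] at hwk ⊢
    nlinarith [h1, h2, h3, h4, hsm, hne, hwk]
  refine ⟨key, fun k => ?_⟩
  have := key k
  have hnn : 0 ≤ (σg + σh) / 8 * ‖u (k + 1) - w k‖ ^ 2 := by positivity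
  linarith
end

section
/- Under the hypotheses of the previous descent estimate (inexact adaptive DCA iterates with σ_g + σ_h > 0 and f = g − h bounded below by m), the series ∑_{k=0}^∞ ‖u^{k+1} − w^k‖² converges, with ∑_{k=0}^∞ ‖u^{k+1} − w^k‖² ≤ 8 (f(u^0) − m)/(σ_g + σ_h); consequently ‖u^{k+1} − w^k‖ → 0 and ε_k → 0 as k → ∞. -/
open scoped RealInnerProductSpace

/-- Under the I-ADCA descent hypotheses with `σg + σh > 0` and `f = g − h`
bounded below by `m`, the series `∑ ‖u^{k+1} − w^k‖²` converges with sum at most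
`8(f(u⁰) − m)/(σg + σh)`; consequently `‖u^{k+1} − w^k‖ → 0` and `ε_k → 0`. -/
theorem iadca_summable
    {H : Type*} [NormedAddCommGroup H] [InnerProductSpace ℝ H] [CompleteSpace H]
    (g h : H → ℝ) (σg σh : ℝ) (hσg : 0 ≤ σg) (hσh : 0 ≤ σh) (hσ : 0 < σg + σh)
    (hgconv : ConvexOn ℝ Set.univ g) (hhconv : ConvexOn ℝ Set.univ h)
    (hgsc : ∀ x y : H, ∀ l : ℝ, 0 ≤ l → l ≤ 1 →
      g (l • x + (1 - l) • y) ≤ l * g x + (1 - l) * g y - σg / 2 * (l * (1 - l)) * ‖x - y‖ ^ 2)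
    (hhsc : ∀ x y : H, ∀ l : ℝ, 0 ≤ l → l ≤ 1 →
      h (l • x + (1 - l) • y) ≤ l * h x + (1 - l) * h y - σh / 2 * (l * (1 - l)) * ‖x - y‖ ^ 2)
    (f : H → ℝ) (hf : ∀ x, f x = g x - h x)
    (m : ℝ) (hbdd : ∀ x, m ≤ f x)
    (u w v : ℕ → H) (ε : ℕ → ℝ) (hεnn : ∀ k, 0 ≤ ε k)
    (hw : ∀ k, f (w k) ≤ f (u k))
    (hvh : ∀ k, ∀ u' : H, ⟪v k, u' - w k⟫ ≤ h u' - h (w k) + ε k)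
    (hvg : ∀ k, ∀ u' : H, ⟪v k, u' - u (k + 1)⟫ ≤ g u' - g (u (k + 1)) + ε k)
    (hεsmall : ∀ k, ε k ≤ (σg + σh) / 32 * ‖u (k + 1) - w k‖ ^ 2) :
    Summable (fun k => ‖u (k + 1) - w k‖ ^ 2) ∧
      (∑' k, ‖u (k + 1) - w k‖ ^ 2) ≤ 8 * (f (u 0) - m) / (σg + σh) ∧
      Filter.Tendsto (fun k => ‖u (k + 1) - w k‖) Filter.atTop (nhds 0) ∧
      Filter.Tendsto ε Filter.atTop (nhds 0) := by
  have key : ∀ k, (σg + σh) / 8 * ‖u (k + 1) - w k‖ ^ 2 ≤ f (u k) - f (u (k + 1)) := by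
    intro k
    set x := u (k + 1) with hx
    set y := w k with hy
    have h1 := hvh k ((1/2:ℝ) • x + (1 - 1/2:ℝ) • y)
    have h2 := hhsc x y (1/2) (by norm_num) (by norm_num)
    have h3 := hvg k ((1/2:ℝ) • y + (1 - 1/2:ℝ) • x)
    have h4 := hgsc y x (1/2) (by norm_num) (by norm_num)
    have e1 : ((1/2:ℝ) • x + (1 - 1/2:ℝ) • y) - y = (1/2:ℝ) • (x - y) := by
      module
    have e2 : ((1/2:ℝ) • y + (1 - 1/2:ℝ) • x) - x = (1/2:ℝ) • (y - x) := by
      module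
    rw [e1, real_inner_smul_right] at h1
    rw [e2, real_inner_smul_right] at h3
    have e3 : ⟪v k, y - x⟫ = -⟪v k, x - y⟫ := by
      rw [show y - x = -(x - y) by abel, inner_neg_right]
    rw [e3] at h3
    have e4 : ‖y - x‖ = ‖x - y‖ := norm_sub_rev _ _
    rw [e4] at h4
    have hε := hεsmall k
    have hwk := hw k
    have hfx := hf x
    have hfy := hf y
    have hfuk := hf (u k)
    nlinarith [sq_nonneg ‖x - y‖]
  have hpart : ∀ n, ∑ k ∈ Finset.range n, ‖u (k + 1) - w k‖ ^ 2
      ≤ 8 * (f (u 0) - m) / (σg + σh) := by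
    intro n
    have t : ∑ k ∈ Finset.range n, (f (u k) - f (u (k + 1))) = f (u 0) - f (u n) :=
      Finset.sum_range_sub' (fun k => f (u k)) n
    have hs : (σg + σh) / 8 * ∑ k ∈ Finset.range n, ‖u (k + 1) - w k‖ ^ 2
        ≤ f (u 0) - f (u n) := by
      rw [Finset.mul_sum]
      calc ∑ k ∈ Finset.range n, (σg + σh) / 8 * ‖u (k + 1) - w k‖ ^ 2
          ≤ ∑ k ∈ Finset.range n, (f (u k) - f (u (k + 1))) :=
            Finset.sum_le_sum fun k _ => key k
        _ = f (u 0) - f (u n) := t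
    have hb := hbdd (u n)
    rw [le_div_iff₀ hσ]
    nlinarith
  have hS : Summable (fun k => ‖u (k + 1) - w k‖ ^ 2) :=
    summable_of_sum_range_le (fun k => by positivity) hpart
  have hD0 := hS.tendsto_atTop_zero
  refine ⟨hS, ?_, ?_, ?_⟩
  · exact Summable.tsum_le_of_sum_range_le hS hpart
  · 
    have h1 : Filter.Tendsto (fun k => Real.sqrt (‖u (k + 1) - w k‖ ^ 2))
        Filter.atTop (nhds (Real.sqrt 0)) :=
      (Real.continuous_sqrt.continuousAt.tendsto).comp hD0
    simpa [Real.sqrt_sq (norm_nonneg _)] using h1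
  · have h2 : Filter.Tendsto (fun k => (σg + σh) / 32 * ‖u (k + 1) - w k‖ ^ 2)
        Filter.atTop (nhds 0) := by
      simpa using hD0.const_mul ((σg + σh) / 32)
    exact squeeze_zero hεnn hεsmall h2
end

section
/- Let H be a real Hilbert space and f : H → ℝ ∪ {∞} proper lower semicontinuous convex. For any ε > 0, u ∈ dom f, and v ∈ ∂_ε f(u), there exists w ∈ H with ‖w − u‖ ≤ √ε such that dist(v, ∂f(w)) ≤ √ε, i.e., v ∈ ∂f(w) + √ε · B̄ where B̄ is the closed unit ball. -/
open scoped RealInnerProductSpace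

private lemma combo_norm_sq' {H : Type*} [NormedAddCommGroup H] [InnerProductSpace ℝ H]
    (c d : H) (s : ℝ) :
    ‖(1 - s) • c + s • d‖ ^ 2
      = (1 - s) * ‖c‖ ^ 2 + s * ‖d‖ ^ 2 - s * (1 - s) * ‖c - d‖ ^ 2 := by
  have h : ∀ z : H, ‖z‖ ^ 2 = ⟪z, z⟫ := fun z => (real_inner_self_eq_norm_sq z).symm
  simp only [h, inner_add_left, inner_add_right, inner_sub_left, inner_sub_right,
    real_inner_smul_left, real_inner_smul_right]
  ring_nf

set_option maxHeartbeats 1600000 in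
/-- Brøndsted–Rockafellar type estimate: for a proper lsc convex
`f : H → EReal`, `ε > 0`, `u ∈ dom f`, and `v ∈ ∂_ε f(u)`, there exists `w` with
`‖w − u‖ ≤ √ε` and a subgradient `v' ∈ ∂ f(w)` with `‖v − v'‖ ≤ √ε`. -/
theorem brondsted_rockafellar_type
    {H : Type*} [NormedAddCommGroup H] [InnerProductSpace ℝ H] [CompleteSpace H]
    (f : H → EReal)
    (hproper_ne_top : ∃ x, f x ≠ ⊤) (hproper_ne_bot : ∀ x, f x ≠ ⊥)
    (hlsc : LowerSemicontinuous f)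
    (hconv : ∀ x y : H, ∀ a b : ℝ, 0 ≤ a → 0 ≤ b → a + b = 1 →
      f (a • x + b • y) ≤ (a : EReal) * f x + (b : EReal) * f y)
    (ε : ℝ) (hε : 0 < ε) (u : H) (hu : f u ≠ ⊤) (v : H)
    (hv : ∀ u' : H, ((⟪v, u' - u⟫ : ℝ) : EReal) ≤ f u' - f u + (ε : EReal)) :
    ∃ w : H, ‖w - u‖ ≤ Real.sqrt ε ∧
      ∃ v' : H, (∀ u' : H, ((⟪v', u' - w⟫ : ℝ) : EReal) ≤ f u' - f w) ∧
        ‖v - v'‖ ≤ Real.sqrt ε := by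
  classical
  obtain ⟨F, hF⟩ : ∃ F : H → ℝ, F = fun x => (f x).toReal := ⟨_, rfl⟩
  have hcoe : ∀ x : H, f x ≠ ⊤ → f x = ((F x : ℝ) : EReal) := by
    intro x hx
    rw [hF]
    exact (EReal.coe_toReal hx (hproper_ne_bot x)).symm
  obtain ⟨q, hq⟩ : ∃ q : H → ℝ, q = fun x => 2⁻¹ * ‖x - u‖ ^ 2 - ⟪v, x - u⟫ := ⟨_, rfl⟩
  -- real version of the ε-subgradient inequality
  have hv' : ∀ x : H, f x ≠ ⊤ → ⟪v, x - u⟫ ≤ F x - F u + ε := by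
    intro x hx
    have h := hv x
    rw [hcoe x hx, hcoe u hu] at h
    have h2 : ((⟪v, x - u⟫ : ℝ) : EReal) ≤ ((F x - F u + ε : ℝ) : EReal) := by
      rw [EReal.coe_add, EReal.coe_sub]; exact h
    exact_mod_cast h2
  -- lower bound for G = F + q on the domain
  have hlb : ∀ x : H, f x ≠ ⊤ → F u - ε + 2⁻¹ * ‖x - u‖ ^ 2 ≤ F x + q x := by
    intro x hx
    have h := hv' x hx
    simp only [hq]
    linarith
  obtain ⟨A, hA⟩ : ∃ A : Set ℝ, A = {r | ∃ x : H, f x ≠ ⊤ ∧ F x + q x = r} := ⟨_, rfl⟩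
  have hqu : q u = 0 := by simp [hq]
  have hA_ne : A.Nonempty := ⟨F u + q u, by rw [hA]; exact ⟨u, hu, rfl⟩⟩
  have hA_bdd : BddBelow A := by
    refine ⟨F u - ε, ?_⟩
    rw [hA]
    rintro r ⟨x, hx, rfl⟩
    have h := hlb x hx
    nlinarith [sq_nonneg ‖x - u‖]
  obtain ⟨m, hm⟩ : ∃ m : ℝ, m = sInf A := ⟨_, rfl⟩
  have hm_le : ∀ x : H, f x ≠ ⊤ → m ≤ F x + q x := by
    intro x hx
    rw [hm]
    exact csInf_le hA_bdd (by rw [hA]; exact ⟨x, hx, rfl⟩)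
  -- minimizing sequence
  have hseq : ∀ n : ℕ, ∃ x : H, f x ≠ ⊤ ∧ F x + q x < m + 1 / (n + 1) := by
    intro n
    have hlt : m < m + 1 / (n + 1 : ℝ) := by
      have : (0:ℝ) < 1 / (n + 1 : ℝ) := by positivity
      linarith
    obtain ⟨r, hrA, hr⟩ := exists_lt_of_csInf_lt hA_ne (hm ▸ hlt)
    rw [hA] at hrA
    obtain ⟨x, hx, rfl⟩ := hrA
    exact ⟨x, hx, by rw [hm]; exact hr⟩
  choose x hxD hxlt using hseq
  -- convex combinations stay in the domain
  have hcomb : ∀ a b : H, ∀ s : ℝ, 0 ≤ s → s ≤ 1 → f a ≠ ⊤ → f b ≠ ⊤ →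
      f ((1 - s) • a + s • b) ≠ ⊤ ∧ F ((1 - s) • a + s • b) ≤ (1 - s) * F a + s * F b := by
    intro a b s hs0 hs1 ha hb
    have h := hconv a b (1 - s) s (by linarith) hs0 (by ring)
    rw [hcoe a ha, hcoe b hb] at h
    have h' : f ((1 - s) • a + s • b) ≤ (((1 - s) * F a + s * F b : ℝ) : EReal) := by
      rw [EReal.coe_add, EReal.coe_mul, EReal.coe_mul]; exact h
    have hne : f ((1 - s) • a + s • b) ≠ ⊤ := by
      intro htop
      rw [htop] at h'
      exact (EReal.coe_lt_top _).not_ge h'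
    refine ⟨hne, ?_⟩
    rw [hcoe _ hne] at h'
    exact_mod_cast h'
  -- exact identity for q along segments
  have hqcomb : ∀ a b : H, ∀ s : ℝ,
      q ((1 - s) • a + s • b)
        = (1 - s) * q a + s * q b - 2⁻¹ * s * (1 - s) * ‖a - b‖ ^ 2 := by
    intro a b s
    have huu : ((1:ℝ) - s) • u + s • u = u := by
      rw [← add_smul]; simp
    have hz : ((1 - s) • a + s • b) - u = (1 - s) • (a - u) + s • (b - u) := by
      rw [smul_sub, smul_sub, sub_add_sub_comm, huu]
    have hcd : (a - u) - (b - u) = a - b := by abel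
    simp only [hq, hz]
    rw [combo_norm_sq', hcd, inner_add_right, real_inner_smul_right, real_inner_smul_right]
    ring
  -- the sequence is Cauchy
  have hGm : ∀ n k : ℕ, ‖x n - x k‖ ^ 2 ≤ 4 * (1 / (n + 1) + 1 / (k + 1)) := by
    intro n k
    have h2 := hcomb (x n) (x k) 2⁻¹ (by norm_num) (by norm_num) (hxD n) (hxD k)
    have hq2 := hqcomb (x n) (x k) 2⁻¹
    have hm2 := hm_le _ h2.1
    have h3 := hxlt n
    have h4 := hxlt k
    linarith [h2.2]
  have hcauchy : CauchySeq x := by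
    apply cauchySeq_of_le_tendsto_0 (fun N : ℕ => Real.sqrt (8 / (N + 1)))
    · intro n k N hn hk
      have h1 : (1:ℝ) / (n + 1) ≤ 1 / (N + 1) := by
        apply one_div_le_one_div_of_le (by positivity)
        have : (N:ℝ) ≤ n := by exact_mod_cast hn
        linarith
      have h2 : (1:ℝ) / (k + 1) ≤ 1 / (N + 1) := by
        apply one_div_le_one_div_of_le (by positivity)
        have : (N:ℝ) ≤ k := by exact_mod_cast hk
        linarith
      have h3 : ‖x n - x k‖ ^ 2 ≤ 8 / (N + 1) := by
        have h5 := hGm n k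
        have h6 : (8:ℝ) / (N + 1) = 8 * (1 / (N + 1)) := by ring
        rw [h6]
        linarith
      rw [dist_eq_norm]
      calc ‖x n - x k‖ = Real.sqrt (‖x n - x k‖ ^ 2) := (Real.sqrt_sq (norm_nonneg _)).symm
        _ ≤ Real.sqrt (8 / (N + 1)) := Real.sqrt_le_sqrt h3
    · have h0 : Filter.Tendsto (fun N : ℕ => 8 / ((N:ℝ) + 1)) Filter.atTop (nhds 0) := by
        have := tendsto_one_div_add_atTop_nhds_zero_nat.const_mul (8:ℝ)
        simpa [mul_one_div, div_eq_mul_inv] using this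
      exact (Real.continuous_sqrt.tendsto' 0 0 Real.sqrt_zero).comp h0
  obtain ⟨w, hw⟩ := cauchySeq_tendsto_of_complete hcauchy
  have hqcont : Continuous q := by
    rw [hq]
    apply Continuous.sub
    · exact (continuous_const.mul (((continuous_id.sub continuous_const).norm).pow 2))
    · exact continuous_const.inner (continuous_id.sub continuous_const)
  -- f w ≤ m - q w
  have hfw : f w ≤ ((m - q w : ℝ) : EReal) := by
    by_contra hcon
    push_neg at hcon
    obtain ⟨y, hy1, hy2⟩ := exists_between hcon
    have hytop : y ≠ ⊤ := by
      intro h; rw [h] at hy2; exact (not_top_lt hy2)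
    have hybot : y ≠ ⊥ := by
      intro h; rw [h] at hy1; exact (not_lt_bot hy1)
    lift y to ℝ using ⟨hytop, hybot⟩ with y
    have hev : ∀ᶠ n in Filter.atTop, (y : EReal) < f (x n) := hw.eventually (hlsc w _ hy2)
    have hbd : ∀ᶠ n in Filter.atTop, y ≤ m + 1 / (n + 1) - q (x n) := by
      filter_upwards [hev] with n hn
      have hfx : f (x n) = ((F (x n) : ℝ) : EReal) := hcoe _ (hxD n)
      rw [hfx] at hn
      have h7 : y < F (x n) := by exact_mod_cast hn
      have h8 := hxlt n
      linarith
    have htend : Filter.Tendsto (fun n : ℕ => m + 1 / (n + 1) - q (x n))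
        Filter.atTop (nhds (m + 0 - q w)) :=
      (tendsto_const_nhds.add tendsto_one_div_add_atTop_nhds_zero_nat).sub
        ((hqcont.tendsto w).comp hw)
    have hyle : y ≤ m + 0 - q w := ge_of_tendsto htend hbd
    have h9 : (m - q w : ℝ) < y := by exact_mod_cast hy1
    linarith
  have hwD : f w ≠ ⊤ := by
    intro h
    rw [h] at hfw
    exact (EReal.coe_lt_top _).not_ge hfw
  have hGw : F w + q w ≤ m := by
    rw [hcoe w hwD] at hfw
    have h10 : F w ≤ m - q w := by exact_mod_cast hfw
    linarith
  obtain ⟨v', hv'def⟩ : ∃ v'' : H, v'' = v - (w - u) := ⟨_, rfl⟩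
  -- v' is a subgradient at w (real form)
  have hsub : ∀ p : H, f p ≠ ⊤ → ⟪v', p - w⟫ ≤ F p - F w := by
    intro p hp
    have key : ∀ s : ℝ, 0 < s → s ≤ 1 →
        ⟪v', p - w⟫ ≤ F p - F w + s * (2⁻¹ * ‖p - w‖ ^ 2) := by
      intro s hs0 hs1
      obtain ⟨hzD, hzF⟩ := hcomb w p s hs0.le hs1 hwD hp
      have hqz := hqcomb w p s
      have hmz := hm_le _ hzD
      -- divide by s
      have h5 : s * (F w + q w) ≤ s * (F p + q p - 2⁻¹ * (1 - s) * ‖w - p‖ ^ 2) := by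
        nlinarith [hGw, hmz, hzF, hqz]
      have h6 : F w + q w ≤ F p + q p - 2⁻¹ * (1 - s) * ‖w - p‖ ^ 2 :=
        le_of_mul_le_mul_left h5 hs0
      have e1 : ‖p - u‖ ^ 2 = ‖p - w‖ ^ 2 + 2 * ⟪p - w, w - u⟫ + ‖w - u‖ ^ 2 := by
        have h11 := norm_add_sq_real (p - w) (w - u)
        rw [sub_add_sub_cancel] at h11
        exact h11
      have e2 : ⟪v, p - u⟫ = ⟪v, p - w⟫ + ⟪v, w - u⟫ := by
        rw [← inner_add_right, sub_add_sub_cancel]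
      have e3 : ⟪v', p - w⟫ = ⟪v, p - w⟫ - ⟪w - u, p - w⟫ := by
        rw [hv'def, inner_sub_left]
      have e4 : ⟪p - w, w - u⟫ = ⟪w - u, p - w⟫ := real_inner_comm _ _
      have e5 : ‖w - p‖ ^ 2 = ‖p - w‖ ^ 2 := by rw [norm_sub_rev]
      have hqp : q p = 2⁻¹ * ‖p - u‖ ^ 2 - ⟪v, p - u⟫ := by simp only [hq]
      have hqw : q w = 2⁻¹ * ‖w - u‖ ^ 2 - ⟪v, w - u⟫ := by simp only [hq]
      rw [e3]
      rw [hqp, hqw, e5, e1, e2] at h6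
      linarith [e4, h6]
    rcases le_or_gt (2⁻¹ * ‖p - w‖ ^ 2) 0 with h0 | h0
    · have h12 := key 1 one_pos le_rfl
      nlinarith
    · refine le_of_forall_pos_le_add fun δ hδ => ?_
      set s : ℝ := min 1 (δ / (2⁻¹ * ‖p - w‖ ^ 2)) with hs
      have hs0 : 0 < s := lt_min one_pos (div_pos hδ h0)
      have hs1 : s ≤ 1 := min_le_left _ _
      have hkey := key s hs0 hs1
      have hsδ : s * (2⁻¹ * ‖p - w‖ ^ 2) ≤ δ := by
        have h7 : s ≤ δ / (2⁻¹ * ‖p - w‖ ^ 2) := min_le_right _ _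
        calc s * (2⁻¹ * ‖p - w‖ ^ 2)
            ≤ (δ / (2⁻¹ * ‖p - w‖ ^ 2)) * (2⁻¹ * ‖p - w‖ ^ 2) :=
              mul_le_mul_of_nonneg_right h7 h0.le
          _ = δ := div_mul_cancel₀ _ (ne_of_gt h0)
      linarith
  -- the distance estimate
  have huw : ‖w - u‖ ^ 2 ≤ ε := by
    have h1 := hsub u hu
    have h2 := hv' w hwD
    have e1 : ⟪v', u - w⟫ = -⟪v, w - u⟫ + ‖w - u‖ ^ 2 := by
      rw [hv'def, inner_sub_left]
      have h13 : (u - w : H) = -(w - u) := by abel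
      rw [h13, inner_neg_right, inner_neg_right, real_inner_self_eq_norm_sq]
      ring
    rw [e1] at h1
    linarith
  have hwu : ‖w - u‖ ≤ Real.sqrt ε := by
    calc ‖w - u‖ = Real.sqrt (‖w - u‖ ^ 2) := (Real.sqrt_sq (norm_nonneg _)).symm
      _ ≤ Real.sqrt ε := Real.sqrt_le_sqrt huw
  refine ⟨w, hwu, v', ?_, ?_⟩
  · intro p
    by_cases hp : f p = ⊤
    · rw [hp, hcoe w hwD, EReal.top_sub_coe]
      exact le_top
    · rw [hcoe p hp, hcoe w hwD, ← EReal.coe_sub, EReal.coe_le_coe_iff]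
      exact hsub p hp
  · have h14 : v - v' = w - u := by rw [hv'def]; abel
    rw [h14]
    exact hwu
end

section
/- Let (ρ_k) be a nonincreasing sequence of nonnegative reals converging to 0, C̃ > 0, and θ ∈ (1/2, 1) such that ρ_{k+1}^{2θ} ≤ C̃(ρ_k − ρ_{k+1}) for all sufficiently large k. Then there exists η > 0 such that ρ_k ≤ η k^{1/(1−2θ)} for all sufficiently large k. -/
open Real

/-- Chord bound for `x ↦ x^q` on `[1,2]`, `q ≥ 1`. -/
lemma chord_rpow (q : ℝ) (hq : 1 ≤ q) (t : ℝ) (ht0 : 0 ≤ t) (ht1 : t ≤ 1) :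
    (1 + t) ^ q ≤ 1 + (2 ^ q - 1) * t := by
  have h := (convexOn_rpow hq).2
    (by norm_num : (1:ℝ) ∈ Set.Ici (0:ℝ)) (by norm_num : (2:ℝ) ∈ Set.Ici (0:ℝ))
    (show (0:ℝ) ≤ 1 - t by linarith) ht0 (show (1 - t) + t = 1 by ring)
  simp only [smul_eq_mul, Real.one_rpow] at h
  have he : (1 - t) * 1 + t * 2 = 1 + t := by ring
  rw [he] at h
  calc (1 + t) ^ q ≤ (1 - t) * 1 + t * 2 ^ q := h
    _ = 1 + (2 ^ q - 1) * t := by ring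

/-- Key decay estimate: for `x ≥ 1`, `x^(-q) - (x+1)^(-q) ≤ 2(2^q-1)(x+1)^(-q-1)`. -/
lemma key_decay (q : ℝ) (hq : 1 ≤ q) (x : ℝ) (hx : 1 ≤ x) :
    x ^ (-q) - (x + 1) ^ (-q) ≤ 2 * (2 ^ q - 1) * (x + 1) ^ (-q - 1) := by
  have hx0 : (0:ℝ) < x := by linarith
  have hx10 : (0:ℝ) < x + 1 := by linarith
  have hA : (0:ℝ) < x ^ q := rpow_pos_of_pos hx0 q
  have hB : (0:ℝ) < (x + 1) ^ q := rpow_pos_of_pos hx10 q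
  have h2q : (1:ℝ) ≤ 2 ^ q := by
    calc (1:ℝ) = 1 ^ q := (one_rpow q).symm
      _ ≤ 2 ^ q := rpow_le_rpow (by norm_num) (by norm_num) (by linarith)
  -- (x+1)^q ≤ x^q + (2^q - 1) * x^(q-1)
  have h1 : (x + 1) ^ q ≤ x ^ q + (2 ^ q - 1) * x ^ (q - 1) := by
    have hxe : x + 1 = x * (1 + 1 / x) := by field_simp
    have hmul : (x + 1) ^ q = x ^ q * (1 + 1 / x) ^ q := by
      rw [hxe, Real.mul_rpow hx0.le (by positivity)]
    have hch := chord_rpow q hq (1 / x) (by positivity) (by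
      rw [div_le_one hx0]; linarith)
    have hq1 : x ^ (q - 1) = x ^ q / x := by
      rw [Real.rpow_sub hx0, Real.rpow_one]
    calc (x + 1) ^ q = x ^ q * (1 + 1 / x) ^ q := hmul
      _ ≤ x ^ q * (1 + (2 ^ q - 1) * (1 / x)) := by
          exact mul_le_mul_of_nonneg_left hch hA.le
      _ = x ^ q + (2 ^ q - 1) * (x ^ q / x) := by field_simp
      _ = x ^ q + (2 ^ q - 1) * x ^ (q - 1) := by rw [hq1]
  -- the "cleared denominators" version
  have key : ((x + 1) ^ q - x ^ q) * (x + 1) ≤ 2 * (2 ^ q - 1) * x ^ q := by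
    have hq1x : x ^ (q - 1) * x = x ^ q := by
      rw [Real.rpow_sub hx0, Real.rpow_one]; field_simp
    have hd : (0:ℝ) ≤ (2 ^ q - 1) * x ^ (q - 1) :=
      mul_nonneg (by linarith) (rpow_pos_of_pos hx0 (q - 1)).le
    nlinarith [mul_le_mul_of_nonneg_right (sub_le_iff_le_add'.mpr h1) hx10.le,
      rpow_pos_of_pos hx0 (q - 1)]
  -- rewrite goal in terms of inverses
  have e1 : x ^ (-q) = (x ^ q)⁻¹ := by rw [Real.rpow_neg hx0.le]
  have e2 : (x + 1) ^ (-q) = ((x + 1) ^ q)⁻¹ := by rw [Real.rpow_neg hx10.le]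
  have e3 : (x + 1) ^ (-q - 1) = ((x + 1) ^ q * (x + 1))⁻¹ := by
    rw [show -q - 1 = -(q + 1) by ring, Real.rpow_neg hx10.le,
      Real.rpow_add hx10, Real.rpow_one]
  rw [e1, e2, e3, inv_sub_inv hA.ne' hB.ne', ← div_eq_mul_inv,
    div_le_div_iff₀ (by positivity) (by positivity)]
  nlinarith [mul_le_mul_of_nonneg_right key hB.le, hB, hA]

/-- Sublinear rate lemma: if `(ρ_k)` is nonnegative, nonincreasing, tends to
`0`, and `ρ_{k+1}^{2θ} ≤ C̃(ρ_k − ρ_{k+1})` for all large `k` with `θ ∈ (1/2, 1)`, then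
there exists `η > 0` with `ρ_k ≤ η k^{1/(1−2θ)}` for all large `k`. -/
theorem rate_sublinear
    (ρ : ℕ → ℝ) (hnn : ∀ k, 0 ≤ ρ k) (hmono : ∀ k, ρ (k + 1) ≤ ρ k)
    (hlim : Filter.Tendsto ρ Filter.atTop (nhds 0))
    (C : ℝ) (hC : 0 < C) (θ : ℝ) (hθ0 : 1 / 2 < θ) (hθ1 : θ < 1)
    (hrec : ∃ N : ℕ, ∀ k ≥ N, ρ (k + 1) ^ (2 * θ) ≤ C * (ρ k - ρ (k + 1))) :
    ∃ η > (0 : ℝ), ∃ N : ℕ, ∀ k ≥ N, ρ k ≤ η * (k : ℝ) ^ (1 / (1 - 2 * θ)) := by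
  obtain ⟨N, hrecN⟩ := hrec
  have h2θ : (1:ℝ) < 2 * θ := by linarith
  have hden : (0:ℝ) < 2 * θ - 1 := by linarith
  set q : ℝ := 1 / (2 * θ - 1) with hq_def
  have hq1 : 1 ≤ q := by
    rw [hq_def, le_div_iff₀ hden]; linarith
  have hq0 : 0 < q := by linarith
  set p : ℝ := -q with hp_def
  have hp_eq : 1 / (1 - 2 * θ) = p := by
    have h1 : (1:ℝ) - 2 * θ = -(2 * θ - 1) := by ring
    rw [hp_def, hq_def, h1, div_neg]
  have hqθ : q * (2 * θ - 1) = 1 := by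
    rw [hq_def]; field_simp
  have hpα : p * (2 * θ) = p - 1 := by
    have : p * (2 * θ - 1) = -1 := by
      rw [hp_def]; nlinarith [hqθ]
    nlinarith [this]
  set c : ℝ := 2 * (2 ^ q - 1) with hc_def
  have h2q : (1:ℝ) < 2 ^ q := by
    rw [Real.one_lt_rpow_iff_of_pos (by norm_num : (0:ℝ) < 2)]
    left; exact ⟨by norm_num, hq0⟩
  have hc0 : 0 < c := by rw [hc_def]; linarith
  set N₀ : ℕ := max N 1 with hN₀_def
  have hN₀1 : 1 ≤ N₀ := le_max_right _ _
  have hN₀N : N ≤ N₀ := le_max_left _ _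
  have hN₀R : (1:ℝ) ≤ (N₀ : ℝ) := by exact_mod_cast hN₀1
  have hN₀pos : (0:ℝ) < (N₀ : ℝ) := by linarith
  set M : ℝ := max ((C * c) ^ q) (ρ N₀ * (N₀ : ℝ) ^ q) with hM_def
  have hCc0 : 0 < C * c := mul_pos hC hc0
  have hM0 : 0 < M := lt_of_lt_of_le (rpow_pos_of_pos hCc0 q) (le_max_left _ _)
  -- key bound on M
  have hMpow : C * c ≤ M ^ (2 * θ - 1) := by
    calc C * c = ((C * c) ^ q) ^ (2 * θ - 1) := by
          rw [← Real.rpow_mul hCc0.le, hqθ, Real.rpow_one]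
      _ ≤ M ^ (2 * θ - 1) :=
          rpow_le_rpow (rpow_pos_of_pos hCc0 q).le (le_max_left _ _) hden.le
  -- main induction
  have main : ∀ k, N₀ ≤ k → ρ k ≤ M * (k : ℝ) ^ p := by
    intro k hk
    induction k, hk using Nat.le_induction with
    | base =>
        have : ρ N₀ = ρ N₀ * (N₀ : ℝ) ^ q * (N₀ : ℝ) ^ p := by
          rw [mul_assoc, ← Real.rpow_add hN₀pos, hp_def, add_neg_cancel,
            Real.rpow_zero, mul_one]
        rw [this]
        exact mul_le_mul_of_nonneg_right (le_max_right _ _)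
          (rpow_pos_of_pos hN₀pos p).le
    | succ k hk IH =>
        have hk1 : (1:ℝ) ≤ (k : ℝ) := le_trans hN₀R (by exact_mod_cast hk)
        have hkpos : (0:ℝ) < (k : ℝ) := by linarith
        have hk1pos : (0:ℝ) < (k : ℝ) + 1 := by linarith
        have hcast : ((k + 1 : ℕ) : ℝ) = (k : ℝ) + 1 := by push_cast; ring
        set A : ℝ := (k : ℝ) ^ p with hA_def
        set B : ℝ := ((k : ℝ) + 1) ^ p with hB_def
        set D : ℝ := ((k : ℝ) + 1) ^ (p - 1) with hD_def
        have hBpos : 0 < B := rpow_pos_of_pos hk1pos p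
        have hDpos : 0 < D := rpow_pos_of_pos hk1pos _
        -- decay bound
        have hdecay : A - B ≤ c * D := by
          have := key_decay q hq1 (k : ℝ) hk1
          rw [hA_def, hB_def, hD_def, hp_def]
          calc (k:ℝ) ^ (-q) - ((k:ℝ) + 1) ^ (-q)
              ≤ 2 * (2 ^ q - 1) * ((k:ℝ) + 1) ^ (-q - 1) := this
            _ = c * ((k:ℝ) + 1) ^ (-q - 1) := by rw [hc_def]
        -- (M*B)^(2θ) = M^(2θ) * D
        have hMB : (M * B) ^ (2 * θ) = M ^ (2 * θ) * D := by
          rw [Real.mul_rpow hM0.le hBpos.le, hB_def,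
            ← Real.rpow_mul hk1pos.le, hpα]
        have hMθ : M * (C * c) ≤ M ^ (2 * θ) := by
          have : M ^ (2 * θ) = M * M ^ (2 * θ - 1) := by
            nth_rewrite 2 [← Real.rpow_one M]
            rw [← Real.rpow_add hM0]
            congr 1; ring
          rw [this]
          exact mul_le_mul_of_nonneg_left hMpow hM0.le
        -- key claim
        have claim : M * A ≤ M * B + (M * B) ^ (2 * θ) / C := by
          rw [hMB, ← sub_le_iff_le_add', le_div_iff₀ hC]
          have h1 : (M * A - M * B) * C ≤ M * (c * D) * C := by
            have : M * A - M * B = M * (A - B) := by ring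
            rw [this]
            exact mul_le_mul_of_nonneg_right
              (mul_le_mul_of_nonneg_left hdecay hM0.le) hC.le
          have h2 : M * (c * D) * C = (M * (C * c)) * D := by ring
          have h3 : (M * (C * c)) * D ≤ M ^ (2 * θ) * D :=
            mul_le_mul_of_nonneg_right hMθ hDpos.le
          linarith
        -- recursion
        have hrk := hrecN k (le_trans hN₀N hk)
        have hrk' : ρ (k + 1) + ρ (k + 1) ^ (2 * θ) / C ≤ ρ k := by
          have : ρ (k + 1) ^ (2 * θ) / C ≤ ρ k - ρ (k + 1) := by
            rw [div_le_iff₀ hC]; linarith [hrk]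
          linarith
        -- conclude
        rw [hcast]
        by_contra hcon
        push_neg at hcon
        have hMB0 : 0 ≤ M * B := by positivity
        have hstrict : (M * B) ^ (2 * θ) < ρ (k + 1) ^ (2 * θ) :=
          Real.rpow_lt_rpow hMB0 hcon (by linarith)
        have hdiv : (M * B) ^ (2 * θ) / C < ρ (k + 1) ^ (2 * θ) / C :=
          (div_lt_div_iff_of_pos_right hC).mpr hstrict
        have : ρ k ≤ M * A := by rw [hA_def]; exact IH
        linarith
  refine ⟨M, hM0, N₀, fun k hk => ?_⟩
  rw [hp_eq]
  exact main k hk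
end
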